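/- arXiv:2403.04909 — 4 statements merged into one kernel-verified Lean document; each statement's English description precedes it below -/
import Mathlib

section
/- Let ℓ ≥ 5 be prime and m ≥ 1, and let b : ℤ → ℤ be any function. Define sequences c⁽⁰⁾(n) = b(n), c⁽¹⁾(n) = b(ℓ²n) + A·(χ(n) − χ(−D))·b(n) + B·b(n/ℓ²) (with b(n/ℓ²) interpreted as 0 when ℓ² ∤ n), and for m ≥ 2, c⁽ᵐ⁾(n) = c⁽ᵐ⁻¹⁾(ℓ²n) + A·χ(n)·c⁽ᵐ⁻¹⁾(n) + B·c⁽ᵐ⁻¹⁾(n/ℓ²) − B·c⁽ᵐ⁻²⁾(n), where A, B ∈ ℤ, D ∈ ℤ, and χ is a completely multiplicative function with χ(ℓ) = 0. Then for all m ≥ 1 and all n, c⁽ᵐ⁾(ℓ²n) − B·c⁽ᵐ⁻¹⁾(n) = b(ℓ^{2m+2}n) − A·χ(−D)·b(ℓ^{2m}n). -/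
/-- Abstract Hecke recursion (Lemma 2.2 of the paper): for sequences `c m` built from `b`
via the Hecke-type recursion, `c m (ℓ²n) − B·c (m−1) n = b(ℓ^{2m+2}n) − A·χ(−D)·b(ℓ^{2m}n)`. -/
theorem stmt0 (ℓ : ℕ) (hℓ : ℓ.Prime) (hℓ5 : 5 ≤ ℓ)
    (A B D : ℤ) (χ : ℤ → ℤ) (hχmul : ∀ x y, χ (x * y) = χ x * χ y) (hχℓ : χ (ℓ : ℤ) = 0)
    (b : ℤ → ℤ) (c : ℕ → ℤ → ℤ)
    (hc0 : ∀ n, c 0 n = b n)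
    (hc1 : ∀ n, c 1 n = b ((ℓ : ℤ) ^ 2 * n) + A * (χ n - χ (-D)) * b n +
      B * (if ((ℓ : ℤ) ^ 2 ∣ n) then b (n / (ℓ : ℤ) ^ 2) else 0))
    (hcrec : ∀ m, 2 ≤ m → ∀ n, c m n = c (m - 1) ((ℓ : ℤ) ^ 2 * n) + A * χ n * c (m - 1) n +
      B * (if ((ℓ : ℤ) ^ 2 ∣ n) then c (m - 1) (n / (ℓ : ℤ) ^ 2) else 0) - B * c (m - 2) n) :
    ∀ m, 1 ≤ m → ∀ n : ℤ,
      c m ((ℓ : ℤ) ^ 2 * n) - B * c (m - 1) n =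
        b ((ℓ : ℤ) ^ (2 * m + 2) * n) - A * χ (-D) * b ((ℓ : ℤ) ^ (2 * m) * n) := by

  have hℓ0 : (ℓ : ℤ) ^ 2 ≠ 0 := by positivity
  have hχ0 : ∀ n : ℤ, χ ((ℓ : ℤ) ^ 2 * n) = 0 := by
    intro n
    rw [pow_two, mul_assoc, hχmul, hχℓ, zero_mul]
  have hdiv : ∀ n : ℤ, (ℓ : ℤ) ^ 2 * n / (ℓ : ℤ) ^ 2 = n := fun n =>
    Int.mul_ediv_cancel_left n hℓ0
  intro m hm
  induction m, hm using Nat.le_induction with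
  | base =>
    intro n
    rw [hc1, hc0, hχ0, if_pos ⟨n, rfl⟩, hdiv]
    ring_nf
  | succ m hm ih =>
    intro n
    have h2 : 2 ≤ m + 1 := by omega
    rw [hcrec (m+1) h2, hχ0, if_pos ⟨n, rfl⟩, hdiv]
    have e1 : m + 1 - 1 = m := by omega
    have e2 : m + 1 - 2 = m - 1 := by omega
    rw [e1, e2]
    have := ih ((ℓ : ℤ) ^ 2 * n)
    have p1 : (ℓ:ℤ) ^ (2*m+2) * ((ℓ:ℤ)^2*n) = (ℓ:ℤ) ^ (2*(m+1)+2) * n := by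
      rw [show 2*(m+1)+2 = (2*m+2)+2 by ring, pow_add]; ring
    have p2 : (ℓ:ℤ) ^ (2*m) * ((ℓ:ℤ)^2*n) = (ℓ:ℤ) ^ (2*(m+1)) * n := by
      rw [show 2*(m+1) = 2*m+2 by ring, pow_add]; ring
    rw [p1, p2] at this
    linarith [this]
end

section
/- With the same setup as the abstract Hecke recursion (sequences c⁽ᵐ⁾ built from b via constants A, B and a completely multiplicative χ with χ(ℓ)=0 and χ(x)² = 1 whenever ℓ ∤ x): if ℓ ∤ n, then for all m ≥ 1, c⁽ᵐ⁾(n) = b(ℓ^{2m}n) + (1 − χ(−D)χ(n)) · Σ_{j=1}^{m} (A·χ(n))^j · b(ℓ^{2m−2j}n). -/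
private lemma Bshift (B : ℤ) (t : ℕ) (g g' : ℕ → ℤ) (h : ∀ i < t, g i = g' (i+1)) :
    B * ∑ i ∈ Finset.range t, B ^ i * g i
      = (∑ i ∈ Finset.range (t + 1), B ^ i * g' i) - g' 0 := by
  rw [Finset.mul_sum, Finset.sum_range_succ']
  simp only [pow_zero, one_mul, add_sub_cancel_right]
  refine Finset.sum_congr rfl fun i hi => ?_
  rw [h i (Finset.mem_range.mp hi), pow_succ]
  ring

private lemma sum_ext (t : ℕ) (g g' : ℕ → ℤ) (h : ∀ i < t, g i = g' i) :
    ∑ i ∈ Finset.range t, g i = ∑ i ∈ Finset.range t, g' i :=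
  Finset.sum_congr rfl fun i hi => h i (Finset.mem_range.mp hi)

private lemma icc_to_range (s : ℕ) (f : ℕ → ℤ) :
    ∑ j ∈ Finset.Icc 1 s, f j = ∑ i ∈ Finset.range s, f (i+1) := by
  rw [← Finset.Ico_add_one_right_eq_Icc, Finset.sum_Ico_eq_sum_range]
  have h : s + 1 - 1 = s := by omega
  rw [h]
  exact Finset.sum_congr rfl fun i _ => by rw [Nat.add_comm]

/-- Abstract form of Lemma 2.4: for `ℓ ∤ n`,
`c m n = b(ℓ^{2m}n) + (1 − χ(−D)χ(n))·Σ_{j=1}^m (A·χ(n))^j·b(ℓ^{2m−2j}n)`. -/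
theorem stmt1 (ℓ : ℕ) (hℓ : ℓ.Prime) (hℓ5 : 5 ≤ ℓ)
    (A B D : ℤ) (χ : ℤ → ℤ) (hχmul : ∀ x y, χ (x * y) = χ x * χ y) (hχℓ : χ (ℓ : ℤ) = 0)
    (hχsq : ∀ x : ℤ, ¬ ((ℓ : ℤ) ∣ x) → χ x ^ 2 = 1)
    (b : ℤ → ℤ) (c : ℕ → ℤ → ℤ)
    (hc0 : ∀ n, c 0 n = b n)
    (hc1 : ∀ n, c 1 n = b ((ℓ : ℤ) ^ 2 * n) + A * (χ n - χ (-D)) * b n +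
      B * (if ((ℓ : ℤ) ^ 2 ∣ n) then b (n / (ℓ : ℤ) ^ 2) else 0))
    (hcrec : ∀ m, 2 ≤ m → ∀ n, c m n = c (m - 1) ((ℓ : ℤ) ^ 2 * n) + A * χ n * c (m - 1) n +
      B * (if ((ℓ : ℤ) ^ 2 ∣ n) then c (m - 1) (n / (ℓ : ℤ) ^ 2) else 0) - B * c (m - 2) n) :
    ∀ n : ℤ, ¬ ((ℓ : ℤ) ∣ n) → ∀ m, 1 ≤ m →
      c m n = b ((ℓ : ℤ) ^ (2 * m) * n) +
        (1 - χ (-D) * χ n) *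
          ∑ j ∈ Finset.Icc 1 m, (A * χ n) ^ j * b ((ℓ : ℤ) ^ (2 * m - 2 * j) * n) := by
  intro n hn
  have hx2 : χ n ^ 2 = 1 := hχsq n hn
  have hℓ0 : (ℓ : ℤ) ≠ 0 := by
    have := hℓ.pos
    exact_mod_cast Nat.pos_iff_ne_zero.mp this
  have hℓ20 : (ℓ : ℤ) ^ 2 ≠ 0 := pow_ne_zero _ hℓ0
  have hχl : ∀ z : ℤ, χ ((ℓ : ℤ) * z) = 0 := fun z => by rw [hχmul, hχℓ, zero_mul]
  have harg : ∀ k : ℕ, (ℓ : ℤ) ^ 2 * ((ℓ : ℤ) ^ (2 * k) * n) = (ℓ : ℤ) ^ (2 * (k + 1)) * n := by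
    intro k; ring
  have hdvd : ∀ k : ℕ, (ℓ : ℤ) ^ 2 ∣ (ℓ : ℤ) ^ (2 * (k + 1)) * n :=
    fun k => ⟨(ℓ : ℤ) ^ (2 * k) * n, (harg k).symm⟩
  have hdiv : ∀ k : ℕ, ((ℓ : ℤ) ^ (2 * (k + 1)) * n) / (ℓ : ℤ) ^ 2 = (ℓ : ℤ) ^ (2 * k) * n :=
    fun k => by rw [← harg k, Int.mul_ediv_cancel_left _ hℓ20]
  have hndvd : ¬ ((ℓ : ℤ) ^ 2 ∣ n) :=
    fun h => hn (dvd_trans (dvd_pow_self _ two_ne_zero) h)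
  have hχ0 : ∀ k : ℕ, χ ((ℓ : ℤ) ^ (2 * (k + 1)) * n) = 0 := by
    intro k
    have h : (ℓ : ℤ) ^ (2 * (k + 1)) * n = (ℓ : ℤ) * ((ℓ : ℤ) ^ (2 * k + 1) * n) := by ring
    rw [h, hχl]
  have key : ∀ m k : ℕ, c m ((ℓ : ℤ) ^ (2 * k) * n)
      = (∑ i ∈ Finset.range (min m k + 1), B ^ i * b ((ℓ : ℤ) ^ (2 * (m + k) - 4 * i) * n))
        - A * χ (-D) *
          (∑ i ∈ Finset.range (min m k), B ^ i * b ((ℓ : ℤ) ^ (2 * (m + k) - 2 - 4 * i) * n))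
        + B ^ k * ((1 - χ (-D) * χ n) *
          ∑ i ∈ Finset.range (m - k),
            (A * χ n) ^ (i + 1) * b ((ℓ : ℤ) ^ (2 * (m - k) - 2 * i - 2) * n)) := by
    intro m
    induction m using Nat.strong_induction_on with
    | _ m IH =>
      match m with
      | 0 =>
        intro k
        simp [hc0, Nat.zero_min, Nat.zero_sub]
      | 1 =>
        intro k
        match k with
        | 0 =>
          have h0 : (ℓ : ℤ) ^ (2 * 0) * n = n := by norm_num
          rw [h0, hc1, if_neg hndvd]
          norm_num [Nat.min_zero, Finset.sum_range_one]
          linear_combination (A * χ (-D) * b n) * hx2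
        | (k + 1) =>
          rw [hc1, if_pos (hdvd k), hdiv k, harg (k + 1), hχ0 k]
          have hmin : min 1 (k + 1) = 1 := by omega
          have he : (1 : ℕ) - (k + 1) = 0 := by omega
          rw [hmin, he]
          rw [Finset.sum_range_succ]
          simp only [Finset.sum_range_one]
          have e1 : 2 * (1 + (k + 1)) - 4 * 0 = 2 * (k + 1 + 1) := by omega
          have e2 : 2 * (1 + (k + 1)) - 4 * 1 = 2 * k := by omega
          have e3 : 2 * (1 + (k + 1)) - 2 - 4 * 0 = 2 * (k + 1) := by omega
          rw [e1, e2, e3]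
          simp only [Finset.range_zero, Finset.sum_empty, mul_zero]
          ring
      | (m + 2) =>
        intro k
        have hrec := hcrec (m + 2) (by omega) ((ℓ : ℤ) ^ (2 * k) * n)
        rw [show m + 2 - 1 = m + 1 from rfl, show m + 2 - 2 = m from rfl] at hrec
        match k with
        | 0 =>
          have h0 : (ℓ : ℤ) ^ (2 * 0) * n = n := by norm_num
          have h2 : (ℓ : ℤ) ^ 2 * n = (ℓ : ℤ) ^ (2 * 1) * n := by norm_num
          rw [h0, if_neg hndvd, h2] at hrec
          have I1 := IH (m + 1) (by omega) 1
          have I0 := IH (m + 1) (by omega) 0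
          have I0' := IH m (by omega) 0
          rw [h0] at I0 I0'
          have hmin1 : min (m + 1) 1 = 1 := by omega
          rw [hmin1, Finset.sum_range_succ] at I1
          simp only [Finset.sum_range_one] at I1
          rw [h0]
          rw [hrec, I1, I0, I0']
          have hT : ∑ i ∈ Finset.range (m + 2),
                (A * χ n) ^ (i + 1) * b ((ℓ : ℤ) ^ (2 * (m + 2) - 2 * i - 2) * n)
              = (A * χ n) * b ((ℓ : ℤ) ^ (2 * (m + 1)) * n)
                + (A * χ n) * ∑ i ∈ Finset.range (m + 1),
                    (A * χ n) ^ (i + 1) * b ((ℓ : ℤ) ^ (2 * (m + 1) - 2 * i - 2) * n) := by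
            rw [Finset.sum_range_succ']
            have h1 : 2 * (m + 2) - 2 * 0 - 2 = 2 * (m + 1) := by omega
            rw [h1, Finset.mul_sum, add_comm]
            congr 1
            · simp
            refine sum_ext _ _ _ fun i hi => ?_
            have h2' : 2 * (m + 2) - 2 * (i + 1) - 2 = 2 * (m + 1) - 2 * i - 2 := by omega
            rw [h2', pow_succ]
            ring
          simp only [Nat.min_zero, Nat.add_zero, Nat.sub_zero, zero_add, Nat.add_sub_cancel,
            pow_zero, pow_one, one_mul, mul_zero, add_zero, sub_zero,
            Finset.range_zero, Finset.sum_empty, Finset.sum_range_one]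
          rw [hT]
          have e1 : 2 * (m + 1 + 1) = 2 * (m + 2) := by omega
          have e2 : 2 * (m + 2) - 4 * 1 = 2 * m := by omega
          have e3 : 2 * (m + 2) - 2 = 2 * (m + 1) := by omega
          rw [e1, e2, e3]
          linear_combination (A * χ (-D) * b ((ℓ : ℤ) ^ (2 * (m + 1)) * n)) * hx2
        | (k + 1) =>
          rw [if_pos (hdvd k), hdiv k, harg (k + 1), hχ0 k] at hrec
          simp only [mul_zero, zero_mul, add_zero] at hrec
          have I1 := IH (m + 1) (by omega) (k + 1 + 1)
          have I2 := IH (m + 1) (by omega) k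
          have I3 := IH m (by omega) (k + 1)
          rw [hrec, I1, I2, I3]
          rcases Nat.lt_trichotomy k m with hkm | hkm | hkm
          · -- subcase c : k < m
            rw [show min (m + 2) (k + 1) = k + 1 from by omega,
              show min (m + 1) (k + 1 + 1) = k + 1 + 1 from by omega,
              show min (m + 1) k = k from by omega,
              show min m (k + 1) = k + 1 from by omega]
            have hP1 : (∑ i ∈ Finset.range (k + 1 + 1 + 1),
                  B ^ i * b ((ℓ : ℤ) ^ (2 * (m + 1 + (k + 1 + 1)) - 4 * i) * n))
                = ∑ i ∈ Finset.range (k + 1 + 1 + 1),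
                  B ^ i * b ((ℓ : ℤ) ^ (2 * (m + 2 + (k + 1)) - 4 * i) * n) :=
              sum_ext _ _ _ fun i _ => by
                have h : 2 * (m + 1 + (k + 1 + 1)) - 4 * i = 2 * (m + 2 + (k + 1)) - 4 * i := by
                  omega
                rw [h]
            have hQ1 : (∑ i ∈ Finset.range (k + 1 + 1),
                  B ^ i * b ((ℓ : ℤ) ^ (2 * (m + 1 + (k + 1 + 1)) - 2 - 4 * i) * n))
                = ∑ i ∈ Finset.range (k + 1 + 1),
                  B ^ i * b ((ℓ : ℤ) ^ (2 * (m + 2 + (k + 1)) - 2 - 4 * i) * n) :=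
              sum_ext _ _ _ fun i _ => by
                have h : 2 * (m + 1 + (k + 1 + 1)) - 2 - 4 * i
                    = 2 * (m + 2 + (k + 1)) - 2 - 4 * i := by omega
                rw [h]
            have hW2 : (∑ i ∈ Finset.range (m + 1 - k),
                  (A * χ n) ^ (i + 1) * b ((ℓ : ℤ) ^ (2 * (m + 1 - k) - 2 * i - 2) * n))
                = ∑ i ∈ Finset.range (m + 2 - (k + 1)),
                  (A * χ n) ^ (i + 1) * b ((ℓ : ℤ) ^ (2 * (m + 2 - (k + 1)) - 2 * i - 2) * n) := by
              rw [show m + 1 - k = m + 2 - (k + 1) from by omega]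
            have hW13 : (∑ i ∈ Finset.range (m + 1 - (k + 1 + 1)),
                  (A * χ n) ^ (i + 1) * b ((ℓ : ℤ) ^ (2 * (m + 1 - (k + 1 + 1)) - 2 * i - 2) * n))
                = ∑ i ∈ Finset.range (m - (k + 1)),
                  (A * χ n) ^ (i + 1) * b ((ℓ : ℤ) ^ (2 * (m - (k + 1)) - 2 * i - 2) * n) := by
              rw [show m + 1 - (k + 1 + 1) = m - (k + 1) from by omega]
            have hB2P : B * (∑ i ∈ Finset.range (k + 1),
                  B ^ i * b ((ℓ : ℤ) ^ (2 * (m + 1 + k) - 4 * i) * n))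
                = (∑ i ∈ Finset.range (k + 1 + 1),
                    B ^ i * b ((ℓ : ℤ) ^ (2 * (m + 2 + (k + 1)) - 4 * i) * n))
                  - b ((ℓ : ℤ) ^ (2 * (m + 2 + (k + 1))) * n) :=
              Bshift B (k + 1) _ _ fun i _ => by
                have h : 2 * (m + 1 + k) - 4 * i = 2 * (m + 2 + (k + 1)) - 4 * (i + 1) := by omega
                rw [h]
            have hB3P : B * (∑ i ∈ Finset.range (k + 1 + 1),
                  B ^ i * b ((ℓ : ℤ) ^ (2 * (m + (k + 1)) - 4 * i) * n))
                = (∑ i ∈ Finset.range (k + 1 + 1 + 1),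
                    B ^ i * b ((ℓ : ℤ) ^ (2 * (m + 2 + (k + 1)) - 4 * i) * n))
                  - b ((ℓ : ℤ) ^ (2 * (m + 2 + (k + 1))) * n) :=
              Bshift B (k + 1 + 1) _ _ fun i _ => by
                have h : 2 * (m + (k + 1)) - 4 * i = 2 * (m + 2 + (k + 1)) - 4 * (i + 1) := by
                  omega
                rw [h]
            have hB2Q : B * (∑ i ∈ Finset.range k,
                  B ^ i * b ((ℓ : ℤ) ^ (2 * (m + 1 + k) - 2 - 4 * i) * n))
                = (∑ i ∈ Finset.range (k + 1),
                    B ^ i * b ((ℓ : ℤ) ^ (2 * (m + 2 + (k + 1)) - 2 - 4 * i) * n))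
                  - b ((ℓ : ℤ) ^ (2 * (m + 2 + (k + 1)) - 2) * n) :=
              Bshift B k _ _ fun i _ => by
                have h : 2 * (m + 1 + k) - 2 - 4 * i
                    = 2 * (m + 2 + (k + 1)) - 2 - 4 * (i + 1) := by omega
                rw [h]
            have hB3Q : B * (∑ i ∈ Finset.range (k + 1),
                  B ^ i * b ((ℓ : ℤ) ^ (2 * (m + (k + 1)) - 2 - 4 * i) * n))
                = (∑ i ∈ Finset.range (k + 1 + 1),
                    B ^ i * b ((ℓ : ℤ) ^ (2 * (m + 2 + (k + 1)) - 2 - 4 * i) * n))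
                  - b ((ℓ : ℤ) ^ (2 * (m + 2 + (k + 1)) - 2) * n) :=
              Bshift B (k + 1) _ _ fun i _ => by
                have h : 2 * (m + (k + 1)) - 2 - 4 * i
                    = 2 * (m + 2 + (k + 1)) - 2 - 4 * (i + 1) := by omega
                rw [h]
            linear_combination hP1 - (A * χ (-D)) * hQ1
              + (B ^ (k + 1) * (1 - χ (-D) * χ n)) * hW2
              + (B ^ (k + 1 + 1) * (1 - χ (-D) * χ n)) * hW13
              + hB2P - hB3P - (A * χ (-D)) * hB2Q + (A * χ (-D)) * hB3Q
          · -- subcase b : k = m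
            subst hkm
            rw [show min (k + 2) (k + 1) = k + 1 from by omega,
              show min (k + 1) (k + 1 + 1) = k + 1 from by omega,
              show min (k + 1) k = k from by omega,
              show min k (k + 1) = k from by omega]
            rw [show k + 1 - (k + 1 + 1) = 0 from by omega,
              show k - (k + 1) = 0 from by omega,
              show k + 2 - (k + 1) = 1 from by omega,
              show k + 1 - k = 1 from by omega]
            simp only [Finset.range_zero, Finset.sum_empty, mul_zero, add_zero]
            have hP1 : (∑ i ∈ Finset.range (k + 1 + 1),
                  B ^ i * b ((ℓ : ℤ) ^ (2 * (k + 1 + (k + 1 + 1)) - 4 * i) * n))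
                = ∑ i ∈ Finset.range (k + 1 + 1),
                  B ^ i * b ((ℓ : ℤ) ^ (2 * (k + 2 + (k + 1)) - 4 * i) * n) :=
              sum_ext _ _ _ fun i _ => by
                have h : 2 * (k + 1 + (k + 1 + 1)) - 4 * i = 2 * (k + 2 + (k + 1)) - 4 * i := by
                  omega
                rw [h]
            have hQ1 : (∑ i ∈ Finset.range (k + 1),
                  B ^ i * b ((ℓ : ℤ) ^ (2 * (k + 1 + (k + 1 + 1)) - 2 - 4 * i) * n))
                = ∑ i ∈ Finset.range (k + 1),
                  B ^ i * b ((ℓ : ℤ) ^ (2 * (k + 2 + (k + 1)) - 2 - 4 * i) * n) :=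
              sum_ext _ _ _ fun i _ => by
                have h : 2 * (k + 1 + (k + 1 + 1)) - 2 - 4 * i
                    = 2 * (k + 2 + (k + 1)) - 2 - 4 * i := by omega
                rw [h]
            have hP23 : (∑ i ∈ Finset.range (k + 1),
                  B ^ i * b ((ℓ : ℤ) ^ (2 * (k + (k + 1)) - 4 * i) * n))
                = ∑ i ∈ Finset.range (k + 1),
                  B ^ i * b ((ℓ : ℤ) ^ (2 * (k + 1 + k) - 4 * i) * n) :=
              sum_ext _ _ _ fun i _ => by
                have h : 2 * (k + (k + 1)) - 4 * i = 2 * (k + 1 + k) - 4 * i := by omega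
                rw [h]
            have hQ23 : (∑ i ∈ Finset.range k,
                  B ^ i * b ((ℓ : ℤ) ^ (2 * (k + (k + 1)) - 2 - 4 * i) * n))
                = ∑ i ∈ Finset.range k,
                  B ^ i * b ((ℓ : ℤ) ^ (2 * (k + 1 + k) - 2 - 4 * i) * n) :=
              sum_ext _ _ _ fun i _ => by
                have h : 2 * (k + (k + 1)) - 2 - 4 * i = 2 * (k + 1 + k) - 2 - 4 * i := by omega
                rw [h]
            linear_combination hP1 - (A * χ (-D)) * hQ1 - B * hP23
              + (A * χ (-D) * B) * hQ23
          · -- subcase a : m < k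
            rw [show min (m + 2) (k + 1) = m + 2 from by omega,
              show min (m + 1) (k + 1 + 1) = m + 1 from by omega,
              show min (m + 1) k = m + 1 from by omega,
              show min m (k + 1) = m from by omega]
            rw [show m + 2 - (k + 1) = 0 from by omega,
              show m + 1 - (k + 1 + 1) = 0 from by omega,
              show m + 1 - k = 0 from by omega,
              show m - (k + 1) = 0 from by omega]
            simp only [Finset.range_zero, Finset.sum_empty, mul_zero, add_zero]
            have hP1 : (∑ i ∈ Finset.range (m + 1 + 1),
                  B ^ i * b ((ℓ : ℤ) ^ (2 * (m + 1 + (k + 1 + 1)) - 4 * i) * n))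
                = ∑ i ∈ Finset.range (m + 1 + 1),
                  B ^ i * b ((ℓ : ℤ) ^ (2 * (m + 2 + (k + 1)) - 4 * i) * n) :=
              sum_ext _ _ _ fun i _ => by
                have h : 2 * (m + 1 + (k + 1 + 1)) - 4 * i = 2 * (m + 2 + (k + 1)) - 4 * i := by
                  omega
                rw [h]
            have hQ1 : (∑ i ∈ Finset.range (m + 1),
                  B ^ i * b ((ℓ : ℤ) ^ (2 * (m + 1 + (k + 1 + 1)) - 2 - 4 * i) * n))
                = ∑ i ∈ Finset.range (m + 1),
                  B ^ i * b ((ℓ : ℤ) ^ (2 * (m + 2 + (k + 1)) - 2 - 4 * i) * n) :=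
              sum_ext _ _ _ fun i _ => by
                have h : 2 * (m + 1 + (k + 1 + 1)) - 2 - 4 * i
                    = 2 * (m + 2 + (k + 1)) - 2 - 4 * i := by omega
                rw [h]
            have hB2P : B * (∑ i ∈ Finset.range (m + 1 + 1),
                  B ^ i * b ((ℓ : ℤ) ^ (2 * (m + 1 + k) - 4 * i) * n))
                = (∑ i ∈ Finset.range (m + 2 + 1),
                    B ^ i * b ((ℓ : ℤ) ^ (2 * (m + 2 + (k + 1)) - 4 * i) * n))
                  - b ((ℓ : ℤ) ^ (2 * (m + 2 + (k + 1))) * n) :=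
              Bshift B (m + 1 + 1) _ _ fun i _ => by
                have h : 2 * (m + 1 + k) - 4 * i = 2 * (m + 2 + (k + 1)) - 4 * (i + 1) := by omega
                rw [h]
            have hB3P : B * (∑ i ∈ Finset.range (m + 1),
                  B ^ i * b ((ℓ : ℤ) ^ (2 * (m + (k + 1)) - 4 * i) * n))
                = (∑ i ∈ Finset.range (m + 1 + 1),
                    B ^ i * b ((ℓ : ℤ) ^ (2 * (m + 2 + (k + 1)) - 4 * i) * n))
                  - b ((ℓ : ℤ) ^ (2 * (m + 2 + (k + 1))) * n) :=
              Bshift B (m + 1) _ _ fun i _ => by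
                have h : 2 * (m + (k + 1)) - 4 * i = 2 * (m + 2 + (k + 1)) - 4 * (i + 1) := by
                  omega
                rw [h]
            have hB2Q : B * (∑ i ∈ Finset.range (m + 1),
                  B ^ i * b ((ℓ : ℤ) ^ (2 * (m + 1 + k) - 2 - 4 * i) * n))
                = (∑ i ∈ Finset.range (m + 2),
                    B ^ i * b ((ℓ : ℤ) ^ (2 * (m + 2 + (k + 1)) - 2 - 4 * i) * n))
                  - b ((ℓ : ℤ) ^ (2 * (m + 2 + (k + 1)) - 2) * n) :=
              Bshift B (m + 1) _ _ fun i _ => by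
                have h : 2 * (m + 1 + k) - 2 - 4 * i
                    = 2 * (m + 2 + (k + 1)) - 2 - 4 * (i + 1) := by omega
                rw [h]
            have hB3Q : B * (∑ i ∈ Finset.range m,
                  B ^ i * b ((ℓ : ℤ) ^ (2 * (m + (k + 1)) - 2 - 4 * i) * n))
                = (∑ i ∈ Finset.range (m + 1),
                    B ^ i * b ((ℓ : ℤ) ^ (2 * (m + 2 + (k + 1)) - 2 - 4 * i) * n))
                  - b ((ℓ : ℤ) ^ (2 * (m + 2 + (k + 1)) - 2) * n) :=
              Bshift B m _ _ fun i _ => by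
                have h : 2 * (m + (k + 1)) - 2 - 4 * i
                    = 2 * (m + 2 + (k + 1)) - 2 - 4 * (i + 1) := by omega
                rw [h]
            linear_combination hP1 - (A * χ (-D)) * hQ1
              + hB2P - hB3P - (A * χ (-D)) * hB2Q + (A * χ (-D)) * hB3Q
  intro m hm
  have hk := key m 0
  simp only [Nat.mul_zero, pow_zero, one_mul, Nat.min_zero, Nat.add_zero, Nat.sub_zero,
    zero_add, Finset.range_zero, Finset.sum_empty, Finset.sum_range_one, mul_zero,
    sub_zero] at hk
  rw [hk]
  have hIcc : ∑ j ∈ Finset.Icc 1 m, (A * χ n) ^ j * b ((ℓ : ℤ) ^ (2 * m - 2 * j) * n)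
      = ∑ i ∈ Finset.range m, (A * χ n) ^ (i + 1) * b ((ℓ : ℤ) ^ (2 * m - 2 * i - 2) * n) := by
    rw [icc_to_range]
    refine sum_ext _ _ _ fun i hi => ?_
    have h : 2 * m - 2 * (i + 1) = 2 * m - 2 * i - 2 := by omega
    rw [h]
  rw [hIcc]
end

section
/- With the same abstract Hecke recursion setup: suppose additionally that the hypothesis of the previous lemma holds and also c⁽ᵐ⁾ satisfies, for ℓ ∣ n with ℓ² ∤ n and m ≥ 2, c⁽ᵐ⁾(n) = c⁽ᵐ⁻¹⁾(ℓ²n) − B·c⁽ᵐ⁻²⁾(n) (since χ(n) = 0 and ℓ² ∤ n imply the middle terms vanish). Then for all m ≥ 1 and all n with ℓ ∣∣ n, c⁽ᵐ⁾(n) = b(ℓ^{2m}n) − A·χ(−D)·b(ℓ^{2m−2}n). -/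
/-!
Put `x j = ℓ ^ (2 * j) * n`. Since `χ` vanishes on every `x j` and `ℓ ^ 2 ∣ x j` exactly when
`j ≥ 1`, the values `u m j = c m (x j)` satisfy a linear recursion in `(m, j)` which determines
them from the rows `m = 0, 1`. With `E (m + 1) j = ∑_{i ≤ min m j} B ^ i * b (x (m + j - 2 * i))`
and `α = A * χ (-D)`, the array `E (m + 1) j - α * E m j` satisfies the same recursion and has
the same first two rows; at `j = 0` it equals `b (x m) - α * b (x (m - 1))`.
-/

namespace HeckeChain

variable {R : Type*} [CommRing R]

/-- `u m j` models `c⁽ᵐ⁾(ℓ^{2j} n)` for `ℓ ∣∣ n`; the `if` is the term `B·c⁽ᵐ⁻¹⁾(ℓ^{2j-2} n)`,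
present exactly when `ℓ² ∣ ℓ^{2j} n`. -/
def IsChainRec (B : R) (u : ℕ → ℕ → R) : Prop :=
  ∀ m j, u (m + 2) j = u (m + 1) (j + 1) + B * (if j = 0 then 0 else u (m + 1) (j - 1)) -
    B * u m j

theorem IsChainRec.ext {B : R} {u v : ℕ → ℕ → R} (hu : IsChainRec B u) (hv : IsChainRec B v)
    (h0 : u 0 = v 0) (h1 : u 1 = v 1) : u = v := by
  funext m
  induction m using Nat.twoStepInduction with
  | zero => exact h0
  | one => exact h1
  | more m ih₀ ih₁ =>
    funext j
    rw [hu, hv, ih₀, ih₁]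

/-- `chainSum B d (m + 1) j = ∑_{i ≤ min m j} B ^ i * d (m + j - 2 * i)`. -/
def chainSum (B : R) (d : ℕ → R) : ℕ → ℕ → R
  | 0, _ => 0
  | m + 1, 0 => d m
  | m + 1, j + 1 => d (m + j + 1) + B * chainSum B d m j

variable (B : R) (d : ℕ → R)

@[simp]
theorem chainSum_zero (j : ℕ) : chainSum B d 0 j = 0 := rfl

@[simp]
theorem chainSum_one (j : ℕ) : chainSum B d 1 j = d j := by
  cases j <;> simp [chainSum]

theorem isChainRec_chainSum : IsChainRec B (chainSum B d) := by
  intro m j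
  cases j with
  | zero => simp [chainSum]
  | succ j =>
    simp only [chainSum, Nat.add_one_ne_zero, if_false, Nat.add_sub_cancel,
      show m + (j + 1) + 1 = m + 1 + j + 1 by omega]
    ring

theorem isChainRec_chainSum_sub (α : R) :
    IsChainRec B (fun m j => chainSum B d (m + 1) j - α * chainSum B d m j) := by
  intro m j
  have h₁ := isChainRec_chainSum B d (m + 1) j
  have h₀ := isChainRec_chainSum B d m j
  split_ifs at h₀ h₁ ⊢ <;> linear_combination h₁ - α * h₀

theorem chainSum_two (j : ℕ) :
    chainSum B d 2 j = d (j + 1) + B * (if j = 0 then 0 else d (j - 1)) := by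
  simp [isChainRec_chainSum B d 0 j]

end HeckeChain

theorem ite_dvd_pow_two_mul_mul {M : Type*} [Zero M] {ℓ n : ℤ} (hℓ : ℓ ≠ 0) (hn : ¬ ℓ ^ 2 ∣ n)
    (f : ℤ → M) (j : ℕ) :
    (if ℓ ^ 2 ∣ ℓ ^ (2 * j) * n then f (ℓ ^ (2 * j) * n / ℓ ^ 2) else 0) =
      if j = 0 then 0 else f (ℓ ^ (2 * (j - 1)) * n) := by
  cases j with
  | zero => simp [hn]
  | succ j =>
    have h : ℓ ^ (2 * (j + 1)) * n = ℓ ^ 2 * (ℓ ^ (2 * j) * n) := by ring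
    simp [h, Int.mul_ediv_cancel_left _ (pow_ne_zero 2 hℓ)]

open HeckeChain in
theorem stmt2_general (ℓ : ℕ) (hℓ : ℓ.Prime)
    (A B D : ℤ) (χ : ℤ → ℤ) (hχmul : ∀ x y, χ (x * y) = χ x * χ y) (hχℓ : χ (ℓ : ℤ) = 0)
    (b : ℤ → ℤ) (c : ℕ → ℤ → ℤ)
    (hc0 : ∀ n, c 0 n = b n)
    (hc1 : ∀ n, c 1 n = b ((ℓ : ℤ) ^ 2 * n) + A * (χ n - χ (-D)) * b n +
      B * (if ((ℓ : ℤ) ^ 2 ∣ n) then b (n / (ℓ : ℤ) ^ 2) else 0))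
    (hcrec : ∀ m, 2 ≤ m → ∀ n, c m n = c (m - 1) ((ℓ : ℤ) ^ 2 * n) + A * χ n * c (m - 1) n +
      B * (if ((ℓ : ℤ) ^ 2 ∣ n) then c (m - 1) (n / (ℓ : ℤ) ^ 2) else 0) - B * c (m - 2) n) :
    ∀ m, 1 ≤ m → ∀ n : ℤ, (ℓ : ℤ) ∣ n → ¬ ((ℓ : ℤ) ^ 2 ∣ n) →
      c m n = b ((ℓ : ℤ) ^ (2 * m) * n) - A * χ (-D) * b ((ℓ : ℤ) ^ (2 * m - 2) * n) := by
  intro m hm n ⟨k, hk⟩ hn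
  set x : ℕ → ℤ := fun j => (ℓ : ℤ) ^ (2 * j) * n
  have hx_succ (j : ℕ) : (ℓ : ℤ) ^ 2 * x j = x (j + 1) := by simp only [x]; ring
  have hχx (j : ℕ) : χ (x j) = 0 := by simp [x, hk, hχmul, hχℓ]
  have hite (f : ℤ → ℤ) (j : ℕ) :
      (if (ℓ : ℤ) ^ 2 ∣ x j then f (x j / (ℓ : ℤ) ^ 2) else 0) =
        if j = 0 then 0 else f (x (j - 1)) :=
    ite_dvd_pow_two_mul_mul (by exact_mod_cast hℓ.ne_zero) hn f j
  set d : ℕ → ℤ := fun j => b (x j)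
  have hsol : (fun m j => c m (x j)) =
      fun m j => chainSum B d (m + 1) j - A * χ (-D) * chainSum B d m j := by
    refine IsChainRec.ext (fun m j => ?_) (isChainRec_chainSum_sub B d _) ?_ ?_
    · simp only [hcrec (m + 2) (by omega) (x j), hχx, hite, hx_succ]
      simp
    · funext j; simp [hc0, d]
    · funext j
      simp only [hc1, hχx, hite, hx_succ, chainSum_one]
      rw [chainSum_two]
      simp only [d]
      ring
  obtain ⟨m, rfl⟩ : ∃ m', m = m' + 1 := ⟨m - 1, by omega⟩
  have h := congrFun (congrFun hsol (m + 1)) 0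
  simp only [x, d, chainSum] at h
  simpa [show 2 * (m + 1) - 2 = 2 * m by omega] using h

/-- Abstract form of Lemma 2.3: if `ℓ ∣∣ n` then
`c m n = b(ℓ^{2m}n) − A·χ(−D)·b(ℓ^{2m−2}n)` for all `m ≥ 1`. -/
theorem stmt2 (ℓ : ℕ) (hℓ : ℓ.Prime) (hℓ5 : 5 ≤ ℓ)
    (A B D : ℤ) (χ : ℤ → ℤ) (hχmul : ∀ x y, χ (x * y) = χ x * χ y) (hχℓ : χ (ℓ : ℤ) = 0)
    (b : ℤ → ℤ) (c : ℕ → ℤ → ℤ)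
    (hc0 : ∀ n, c 0 n = b n)
    (hc1 : ∀ n, c 1 n = b ((ℓ : ℤ) ^ 2 * n) + A * (χ n - χ (-D)) * b n +
      B * (if ((ℓ : ℤ) ^ 2 ∣ n) then b (n / (ℓ : ℤ) ^ 2) else 0))
    (hcrec : ∀ m, 2 ≤ m → ∀ n, c m n = c (m - 1) ((ℓ : ℤ) ^ 2 * n) + A * χ n * c (m - 1) n +
      B * (if ((ℓ : ℤ) ^ 2 ∣ n) then c (m - 1) (n / (ℓ : ℤ) ^ 2) else 0) - B * c (m - 2) n)
    (hcrec' : ∀ m, 2 ≤ m → ∀ n : ℤ, (ℓ : ℤ) ∣ n → ¬ ((ℓ : ℤ) ^ 2 ∣ n) →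
      c m n = c (m - 1) ((ℓ : ℤ) ^ 2 * n) - B * c (m - 2) n) :
    ∀ m, 1 ≤ m → ∀ n : ℤ, (ℓ : ℤ) ∣ n → ¬ ((ℓ : ℤ) ^ 2 ∣ n) →
      c m n = b ((ℓ : ℤ) ^ (2 * m) * n) - A * χ (-D) * b ((ℓ : ℤ) ^ (2 * m - 2) * n) :=
  stmt2_general ℓ hℓ A B D χ hχmul hχℓ b c hc0 hc1 hcrec
end

section
/- Let ℓ ≥ 5 be prime and m ≥ 1. Given integers a₄, a₆, h, P, n with: a₄ ≡ a₆ ≡ 0 (mod ℓ^{5m}), and the exact rational identity S = (n·ℓ^{2m}/11520 + 1/2304)·a₄ + a₆/38880 + (−n²·ℓ^{5m}/23040 − n·ℓ^{3m}/2304 − ℓ^m/2560)·h + (−13·n³·ℓ^{6m}/124416 − n²·ℓ^{4m}/1152 − n·ℓ^{2m}/2560)·P with S ∈ ℤ. Then S ≡ 0 (mod ℓ^{m − δ}), where δ = 1 if ℓ ∈ {5, 7} and δ = 0 otherwise. -/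
/-- Abstract form of the spt₃ step of Theorem 1.1: each term of the exact rational identity is
divisible by a high power of `ℓ` except `−(ℓ^m/2560)·h`, so `S ≡ 0 (mod ℓ^{m−δ})` with
`δ = δ_{5,ℓ} + δ_{7,ℓ}`. -/
theorem stmt15 (ℓ : ℕ) (hℓ : ℓ.Prime) (hℓ5 : 5 ≤ ℓ) (m : ℕ) (hm : 1 ≤ m)
    (a4 a6 h P n S : ℤ)
    (ha4 : ((ℓ : ℤ) ^ (5 * m)) ∣ a4) (ha6 : ((ℓ : ℤ) ^ (5 * m)) ∣ a6)
    (hid : (S : ℚ) =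
      ((n : ℚ) * (ℓ : ℚ) ^ (2 * m) / 11520 + 1 / 2304) * (a4 : ℚ) + (a6 : ℚ) / 38880 +
      (-(n : ℚ) ^ 2 * (ℓ : ℚ) ^ (5 * m) / 23040 - (n : ℚ) * (ℓ : ℚ) ^ (3 * m) / 2304 -
        (ℓ : ℚ) ^ m / 2560) * (h : ℚ) +
      (-13 * (n : ℚ) ^ 3 * (ℓ : ℚ) ^ (6 * m) / 124416 - (n : ℚ) ^ 2 * (ℓ : ℚ) ^ (4 * m) / 1152 -
        (n : ℚ) * (ℓ : ℚ) ^ (2 * m) / 2560) * (P : ℚ)) :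
    ((ℓ : ℤ) ^ (m - (if ℓ = 5 then 1 else 0) - (if ℓ = 7 then 1 else 0))) ∣ S := by
  obtain ⟨a, ha⟩ := ha4
  obtain ⟨b, hb⟩ := ha6
  -- integer form of the identity, multiplied by 622080 = 2^9·3^5·5
  have key : (622080 : ℤ) * S =
      a4 * (54 * n * (ℓ : ℤ) ^ (2 * m) + 270) + 16 * a6 -
      h * (27 * n ^ 2 * (ℓ : ℤ) ^ (5 * m) + 270 * n * (ℓ : ℤ) ^ (3 * m) + 243 * (ℓ : ℤ) ^ m) -
      P * (65 * n ^ 3 * (ℓ : ℤ) ^ (6 * m) + 540 * n ^ 2 * (ℓ : ℤ) ^ (4 * m) +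
        243 * n * (ℓ : ℤ) ^ (2 * m)) := by
    have : ((622080 : ℤ) * S : ℚ) =
        ((a4 * (54 * n * (ℓ : ℤ) ^ (2 * m) + 270) + 16 * a6 -
        h * (27 * n ^ 2 * (ℓ : ℤ) ^ (5 * m) + 270 * n * (ℓ : ℤ) ^ (3 * m) + 243 * (ℓ : ℤ) ^ m) -
        P * (65 * n ^ 3 * (ℓ : ℤ) ^ (6 * m) + 540 * n ^ 2 * (ℓ : ℤ) ^ (4 * m) +
          243 * n * (ℓ : ℤ) ^ (2 * m)) : ℤ) : ℚ) := by
      push_cast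
      linear_combination (622080 : ℚ) * hid
    exact_mod_cast this
  have hp2 : (ℓ : ℤ) ^ (2 * m) = ((ℓ : ℤ) ^ m) ^ 2 := by rw [pow_mul']
  have hp3 : (ℓ : ℤ) ^ (3 * m) = ((ℓ : ℤ) ^ m) ^ 3 := by rw [pow_mul']
  have hp4 : (ℓ : ℤ) ^ (4 * m) = ((ℓ : ℤ) ^ m) ^ 4 := by rw [pow_mul']
  have hp5 : (ℓ : ℤ) ^ (5 * m) = ((ℓ : ℤ) ^ m) ^ 5 := by rw [pow_mul']
  have hp6 : (ℓ : ℤ) ^ (6 * m) = ((ℓ : ℤ) ^ m) ^ 6 := by rw [pow_mul']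
  set t : ℤ := (ℓ : ℤ) ^ m with ht
  have key2 : (622080 : ℤ) * S = t *
      (a * t ^ 4 * (54 * n * t ^ 2 + 270) + 16 * b * t ^ 4 -
       h * (27 * n ^ 2 * t ^ 4 + 270 * n * t ^ 2 + 243) -
       P * (65 * n ^ 3 * t ^ 5 + 540 * n ^ 2 * t ^ 3 + 243 * n * t)) := by
    rw [hp2, hp3, hp5, hp6, hp4, ha, hb] at key
    rw [key]; ring
  have hdvd : t ∣ 622080 * S := ⟨_, key2⟩
  by_cases h5 : ℓ = 5
  · subst h5
    simp only [if_pos rfl, if_neg (by norm_num : (5 : ℕ) ≠ 7)]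
    -- 622080 = 5 * 124416, and gcd(5,124416)=1
    have h1 : (5 : ℤ) ^ m ∣ 5 * (124416 * S) := by
      have : (5 : ℤ) * (124416 * S) = 622080 * S := by ring
      rw [this]
      have : t = (5 : ℤ) ^ m := by rw [ht]; norm_num
      rw [← this]; exact hdvd
    have h2 : (5 : ℤ) ^ (m - 1) ∣ 124416 * S := by
      rcases h1 with ⟨c, hc⟩
      refine ⟨c, ?_⟩
      have hm' : m = 1 + (m - 1) := by omega
      rw [hm', pow_add, pow_one, mul_assoc] at hc
      exact mul_left_cancel₀ (by norm_num) hc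
    have hcop : IsCoprime ((5 : ℤ) ^ (m - 1)) 124416 := by
      apply IsCoprime.pow_left
      rw [Int.isCoprime_iff_gcd_eq_one]
      decide
    simpa [Nat.sub_zero] using hcop.dvd_of_dvd_mul_left h2
  · -- ℓ ≠ 5, so ℓ is coprime to 622080 = 2^9·3^5·5
    have hndvd : ¬ (ℓ ∣ 622080) := by
      intro hd
      have h622 : (622080 : ℕ) = 2 ^ 9 * (3 ^ 5 * 5) := by norm_num
      rw [h622] at hd
      rcases (Nat.Prime.dvd_mul hℓ).mp hd with h' | h'
      · have := Nat.Prime.dvd_of_dvd_pow hℓ h'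
        have := (Nat.prime_dvd_prime_iff_eq hℓ Nat.prime_two).mp this
        omega
      · rcases (Nat.Prime.dvd_mul hℓ).mp h' with h'' | h''
        · have := Nat.Prime.dvd_of_dvd_pow hℓ h''
          have := (Nat.prime_dvd_prime_iff_eq hℓ Nat.prime_three).mp this
          omega
        · have := (Nat.prime_dvd_prime_iff_eq hℓ (by norm_num)).mp h''
          omega
    have hcopn : Nat.Coprime ℓ 622080 := (Nat.Prime.coprime_iff_not_dvd hℓ).mpr hndvd
    have hcop : IsCoprime t (622080 : ℤ) := by
      apply IsCoprime.pow_left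
      exact_mod_cast Nat.isCoprime_iff_coprime.mpr hcopn
    have hS : t ∣ S := hcop.dvd_of_dvd_mul_right (mul_comm (622080 : ℤ) S ▸ hdvd)
    exact dvd_trans (pow_dvd_pow _ (by omega)) hS
end
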